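/- arXiv:2110.11379 — 2 statements merged into one kernel-verified Lean document; each statement's English description precedes it below -/
import Mathlib

section
/- Let G be a metabelian group and let a ∈ G be a left l-Engel element. Then the subgroup G'⟨a⟩ generated by the derived subgroup and a is a normal subgroup of G which is nilpotent of class at most l. -/
/-
Write `A = G'`, which is abelian and normal, and `H = A⟨a⟩`; `H` is normal as it contains `G'`.
As `A` is abelian, `c ↦ [c, a]` is an endomorphism of `A`, and it commutes with conjugation by
elements of `G`, so the images `B k = [A, a, …, a]` of its powers are normal in `G`.
Since `B k ≤ A` commutes with `A` and `[B k, a] ⊆ B (k + 1)`, we get `[B k, H] ≤ B (k + 1)`,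
and likewise `[H, H] ≤ B 1`. Hence `γ (k + 1) H ≤ B (k + 1)`, and the Engel condition says
`B l = 1`.
-/

/-- Left-normed commutator `[a,b] = a⁻¹ b⁻¹ a b`. -/
def cmt {G : Type*} [Group G] (a b : G) : G := a⁻¹ * b⁻¹ * a * b

/-- Iterated left-normed commutator `[a, x₁, ..., x_k]`. -/
def itCmt {G : Type*} [Group G] (a : G) (l : List G) : G := l.foldl cmt a

/-- `Xset a k` is the set of commutators `[a, x₁, ..., x_k]` with `xᵢ ∈ G`. -/
def Xset {G : Type*} [Group G] (a : G) (k : ℕ) : Set G :=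
  {b | ∃ l : List G, l.length = k ∧ itCmt a l = b}

open scoped commutatorElement

namespace Subgroup

variable {G : Type*} [Group G]

theorem commutatorElement_mem_of_mem_closure {N : Subgroup G} [N.Normal] {x y : G} {T : Set G}
    (hT : ∀ t ∈ T, ⁅x, t⁆ ∈ N) (hy : y ∈ closure T) : ⁅x, y⁆ ∈ N := by
  -- the `z` with `⁅x, z⁆ ∈ N` form the preimage of the centralizer of `x` in `G ⧸ N`
  have hmem (z : G) :
      ⁅x, z⁆ ∈ N ↔ z ∈ (centralizer {(x : G ⧸ N)}).comap (QuotientGroup.mk' N) := by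
    rw [mem_comap, mem_centralizer_singleton_iff, eq_comm,
      ← commutatorElement_eq_one_iff_mul_comm]
    change _ ↔ ⁅QuotientGroup.mk' N x, QuotientGroup.mk' N z⁆ = 1
    rw [← map_commutatorElement, ← MonoidHom.mem_ker, QuotientGroup.ker_mk']
  exact (hmem y).2 ((closure_le _).2 (fun t ht => (hmem t).1 (hT t ht)) hy)

theorem commutator_closure_closure_le {N : Subgroup G} [N.Normal] {S T : Set G}
    (h : ∀ s ∈ S, ∀ t ∈ T, ⁅s, t⁆ ∈ N) : ⁅closure S, closure T⁆ ≤ N := by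
  refine commutator_le.2 fun x hx y hy =>
    commutatorElement_mem_of_mem_closure (fun t ht => ?_) hy
  rw [← commutatorElement_inv, inv_mem_iff]
  refine commutatorElement_mem_of_mem_closure (fun s hs => ?_) hx
  rw [← commutatorElement_inv, inv_mem_iff]
  exact h s hs t ht

end Subgroup

section Engel

open Subgroup

variable {G : Type*} [Group G]

theorem cmt_eq_commutatorElement (x y : G) : cmt x y = ⁅x⁻¹, y⁻¹⁆ := by
  simp only [cmt, commutatorElement_def, inv_inv]

theorem cmt_mem_commutator (x y : G) : cmt x y ∈ commutator G := by
  rw [cmt_eq_commutatorElement]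
  exact commutator_mem_commutator (mem_top _) (mem_top _)

theorem itCmt_replicate_succ (x a : G) (k : ℕ) :
    itCmt x (List.replicate (k + 1) a) = itCmt (cmt x a) (List.replicate k a) :=
  rfl

theorem itCmt_replicate_succ' (x a : G) (k : ℕ) :
    itCmt x (List.replicate (k + 1) a) = cmt (itCmt x (List.replicate k a)) a := by
  rw [List.replicate_succ', itCmt, List.foldl_append]
  rfl

variable (hcomm : ∀ x ∈ commutator G, ∀ y ∈ commutator G, x * y = y * x) (a : G)
include hcomm

theorem cmt_mul_left_of_mem {c d : G} (hd : d ∈ commutator G) :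
    cmt (c * d) a = cmt c a * cmt d a := by
  have hcd : d⁻¹ * cmt c a * d = cmt c a := by
    rw [hcomm _ (inv_mem hd) _ (cmt_mem_commutator c a), inv_mul_cancel_right]
  rw [← hcd]
  simp only [cmt]
  group

theorem conj_cmt_of_mem {c : G} (hc : c ∈ commutator G) (g : G) :
    g * cmt c a * g⁻¹ = cmt (g * c * g⁻¹) a := by
  set y := g * c * g⁻¹
  -- conjugation by `g` replaces `a` by `a * u`
  set u := cmt a g⁻¹
  have hy : y ∈ commutator G := Normal.conj_mem inferInstance c hc g
  have hu : u ∈ commutator G := cmt_mem_commutator a g⁻¹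
  have hyu : y⁻¹ * u⁻¹ = u⁻¹ * y⁻¹ := by
    rw [← mul_inv_rev, ← mul_inv_rev, hcomm y hy u hu]
  calc g * cmt c a * g⁻¹ = y⁻¹ * (u⁻¹ * a⁻¹) * y * (a * u) := by
        simp only [y, u, cmt]
        group
    _ = u⁻¹ * cmt y a * u := by
        rw [← mul_assoc y⁻¹, hyu]
        simp only [cmt]
        group
    _ = cmt y a := by
        rw [mul_assoc, hcomm _ (cmt_mem_commutator y a) u hu, inv_mul_cancel_left]

def engelHom : Monoid.End (commutator G) where
  toFun c := ⟨cmt (c : G) a, cmt_mem_commutator (c : G) a⟩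
  map_one' := Subtype.ext (by simp [cmt])
  map_mul' c d := Subtype.ext (cmt_mul_left_of_mem hcomm a d.2)

theorem coe_engelHom_pow_apply (k : ℕ) (c : commutator G) :
    ((engelHom hcomm a ^ k) c : G) = itCmt (c : G) (List.replicate k a) := by
  induction k generalizing c with
  | zero => rfl
  | succ k ih =>
    rw [Monoid.End.coe_pow, Function.iterate_succ_apply, ← Monoid.End.coe_pow, ih]
    rfl

theorem conj_itCmt_replicate_of_mem (k : ℕ) {c : G} (hc : c ∈ commutator G) (g : G) :
    g * itCmt c (List.replicate k a) * g⁻¹ = itCmt (g * c * g⁻¹) (List.replicate k a) := by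
  induction k generalizing c with
  | zero => rfl
  | succ k ih =>
    rw [itCmt_replicate_succ, itCmt_replicate_succ, ih (cmt_mem_commutator c a),
      conj_cmt_of_mem hcomm a hc]

/-- The subgroup `[G', a, …, a]`, with `a` repeated `k` times. -/
def engelRange (k : ℕ) : Subgroup G :=
  ((commutator G).subtype.comp (engelHom hcomm a ^ k)).range

theorem mem_engelRange {k : ℕ} {x : G} :
    x ∈ engelRange hcomm a k ↔ ∃ c ∈ commutator G, itCmt c (List.replicate k a) = x := by
  refine MonoidHom.mem_range.trans
    ⟨fun ⟨c, hcx⟩ => ⟨c, c.2, ?_⟩, fun ⟨c, hc, hcx⟩ => ⟨⟨c, hc⟩, ?_⟩⟩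
  · exact (coe_engelHom_pow_apply hcomm a k c).symm.trans hcx
  · exact (coe_engelHom_pow_apply hcomm a k ⟨c, hc⟩).trans hcx

theorem engelRange_le_commutator (k : ℕ) : engelRange hcomm a k ≤ commutator G := by
  rintro _ ⟨c, rfl⟩
  exact ((engelHom hcomm a ^ k) c).2

theorem commutator_le_engelRange_zero : commutator G ≤ engelRange hcomm a 0 :=
  fun c hc => (mem_engelRange hcomm a).2 ⟨c, hc, rfl⟩

instance engelRange_normal (k : ℕ) : (engelRange hcomm a k).Normal := by
  refine ⟨fun x hx g => ?_⟩
  obtain ⟨c, hc, rfl⟩ := (mem_engelRange hcomm a).1 hx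
  rw [conj_itCmt_replicate_of_mem hcomm a k hc]
  exact (mem_engelRange hcomm a).2 ⟨_, Normal.conj_mem inferInstance c hc g, rfl⟩

theorem engelRange_eq_bot {l : ℕ} (hl : ∀ x : G, itCmt x (List.replicate l a) = 1) :
    engelRange hcomm a l = ⊥ := by
  refine eq_bot_iff.2 fun x hx => ?_
  obtain ⟨c, -, rfl⟩ := (mem_engelRange hcomm a).1 hx
  exact hl c

theorem commutatorElement_inv_mem_engelRange_succ {k : ℕ} {x : G}
    (hx : x ∈ engelRange hcomm a k) : ⁅x, a⁻¹⁆ ∈ engelRange hcomm a (k + 1) := by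
  obtain ⟨c, hc, hcx⟩ := (mem_engelRange hcomm a).1 (inv_mem hx)
  refine (mem_engelRange hcomm a).2 ⟨c, hc, ?_⟩
  rw [itCmt_replicate_succ', hcx, cmt_eq_commutatorElement, inv_inv]

theorem commutator_engelRange_le (k : ℕ) :
    ⁅engelRange hcomm a k, closure ((commutator G : Set G) ∪ {a⁻¹})⁆ ≤
      engelRange hcomm a (k + 1) := by
  conv_lhs => rw [← (engelRange hcomm a k).closure_eq]
  refine commutator_closure_closure_le fun s hs t ht => ?_
  rcases ht with ht | rfl
  · have hs' := engelRange_le_commutator hcomm a k hs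
    rw [commutatorElement_eq_one_iff_mul_comm.2 (hcomm s hs' t ht)]
    exact one_mem _
  · exact commutatorElement_inv_mem_engelRange_succ hcomm a hs

theorem commutator_le_engelRange_one :
    ⁅closure ((commutator G : Set G) ∪ {a⁻¹}), closure ((commutator G : Set G) ∪ {a⁻¹})⁆ ≤
      engelRange hcomm a 1 := by
  have hG' {c t : G} (hc : c ∈ commutator G)
      (ht : t ∈ (commutator G : Set G) ∪ {a⁻¹}) :
      ⁅c, t⁆ ∈ engelRange hcomm a 1 :=
    commutator_engelRange_le hcomm a 0 <|
      commutator_mem_commutator (commutator_le_engelRange_zero hcomm a hc) (subset_closure ht)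
  refine commutator_closure_closure_le fun s hs t ht => ?_
  rcases hs with hs | rfl
  · exact hG' hs ht
  rcases ht with ht | rfl
  · rw [← commutatorElement_inv, inv_mem_iff]
    exact hG' ht (Or.inr rfl)
  · rw [commutatorElement_self]
    exact one_mem _

theorem lowerCentralSeries_succ_le_engelRange (k : ℕ) :
    (closure ((commutator G : Set G) ∪ {a⁻¹})).lowerCentralSeries (k + 1) ≤
      engelRange hcomm a (k + 1) := by
  induction k with
  | zero => exact commutator_le_engelRange_one hcomm a
  | succ k ih => exact (commutator_mono ih le_rfl).trans (commutator_engelRange_le hcomm a _)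

end Engel

theorem stmt_5 {G : Type*} [Group G]
    (hmeta : ∀ x ∈ commutator G, ∀ y ∈ commutator G, x * y = y * x)
    (l : ℕ) (a : G)
    (ha : ∀ x : G, itCmt x (List.replicate l a) = 1) :
    (commutator G ⊔ Subgroup.closure {a}).Normal ∧
      Subgroup.lowerCentralSeries (⊤ : Subgroup ↥(commutator G ⊔ Subgroup.closure {a})) l = ⊥ := by
  refine ⟨.of_commutator_le _ le_sup_left, ?_⟩
  refine (Subgroup.map_eq_bot_iff_of_injective _ (Subgroup.subtype_injective _)).1 ?_
  rw [Subgroup.top_subtype_lowerCentralSeries]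
  obtain _ | l := l
  · exact eq_bot_iff.2 fun x _ => ha x
  · rw [← Subgroup.closure_singleton_inv, ← (commutator G).closure_eq,
      ← Subgroup.closure_union]
    exact eq_bot_iff.2 <|
      (lowerCentralSeries_succ_le_engelRange hmeta a l).trans (engelRange_eq_bot hmeta a ha).le
end

section
/- Let G be a group, k ≥ 1, and a, b ∈ G with |a|_k ≤ n and |b|_k finite. Then |ab|_k ≤ n³·|b|_k. -/
/-!
Write `cʷ = w⁻¹ c w`. From `[xy, g] = [x, g]ʸ [y, g]` one gets by induction on `k` that every
`[ab, x₁, …, x_k]` has the form `cʷ d` with `c ∈ X_k(a)` and `d ∈ X_k(b)`. A conjugate of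
`c = [u, x] ∈ X_k(a)` is itself a product of two elements of `X_k(a)`, since
`[u, x]ʷ = [u, w]⁻¹ [u, xw]`. Hence `X_k(ab) ⊆ X_k(a)⁻¹ X_k(a) X_k(b)`, so
`|ab|_k ≤ n² |b|_k ≤ n³ |b|_k`, the last step because `1 ∈ X_k(a)` forces `n ≥ 1`.
-/

open scoped Pointwise

theorem Set.encard_mul_le {M : Type*} [Mul M] (s t : Set M) :
    (s * t).encard ≤ s.encard * t.encard := by
  simp only [← Set.toENat_cardinalMk, ← map_mul]
  exact Cardinal.toENat.monotone' Cardinal.mk_mul_le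

section

variable {G : Type*} [Group G]

theorem itCmt_append_singleton (a : G) (l : List G) (y : G) :
    itCmt a (l ++ [y]) = cmt (itCmt a l) y := by
  simp [itCmt, List.foldl_append]

theorem cmt_mem_Xset_succ {a c : G} {k : ℕ} (hc : c ∈ Xset a k) (z : G) :
    cmt c z ∈ Xset a (k + 1) := by
  obtain ⟨l, rfl, rfl⟩ := hc
  exact ⟨l ++ [z], by simp, itCmt_append_singleton a l z⟩

theorem one_mem_Xset (a : G) {k : ℕ} (hk : 1 ≤ k) : (1 : G) ∈ Xset a k := by
  obtain ⟨j, rfl⟩ := Nat.exists_eq_add_of_le' hk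
  exact ⟨List.replicate j 1 ++ [1], by simp, by simp [itCmt_append_singleton, cmt]⟩

theorem exists_itCmt_mul_eq (a b : G) {l : List G} (hl : l ≠ []) :
    ∃ c ∈ Xset a l.length, ∃ d ∈ Xset b l.length, ∃ w : G,
      itCmt (a * b) l = w⁻¹ * c * w * d := by
  induction l using List.reverseRecOn with
  | nil => exact absurd rfl hl
  | append_singleton l y ih =>
    rcases eq_or_ne l [] with rfl | hne
    · refine ⟨cmt a y, ⟨[y], rfl, rfl⟩, cmt b y, ⟨[y], rfl, rfl⟩, b, ?_⟩
      simp only [List.nil_append, itCmt, List.foldl, cmt]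
      group
    · obtain ⟨c, hc, d, hd, w, hw⟩ := ih hne
      refine ⟨cmt c (w * y * w⁻¹), by simpa using cmt_mem_Xset_succ hc _,
        cmt d y, by simpa using cmt_mem_Xset_succ hd _, w * d, ?_⟩
      rw [itCmt_append_singleton, hw]
      simp only [cmt]
      group

theorem conj_mem_inv_mul_Xset {a c : G} {k : ℕ} (hk : 1 ≤ k) (hc : c ∈ Xset a k) (w : G) :
    w⁻¹ * c * w ∈ (Xset a k)⁻¹ * Xset a k := by
  obtain ⟨j, rfl⟩ := Nat.exists_eq_add_of_le' hk
  obtain ⟨l, hl, rfl⟩ := hc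
  obtain ⟨l, x, rfl⟩ := (List.eq_nil_or_concat l).resolve_left (by rintro rfl; simp at hl)
  have hu : itCmt a l ∈ Xset a j := ⟨l, by simpa using hl, rfl⟩
  refine ⟨(cmt (itCmt a l) w)⁻¹, by simpa using cmt_mem_Xset_succ hu w,
    cmt (itCmt a l) (x * w), cmt_mem_Xset_succ hu (x * w), ?_⟩
  simp only [List.concat_eq_append, itCmt_append_singleton, cmt]
  group

theorem Xset_mul_subset (a b : G) {k : ℕ} (hk : 1 ≤ k) :
    Xset (a * b) k ⊆ (Xset a k)⁻¹ * Xset a k * Xset b k := by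
  rintro _ ⟨l, rfl, rfl⟩
  obtain ⟨c, hc, d, hd, w, hw⟩ := exists_itCmt_mul_eq a b (l := l) (by rintro rfl; simp at hk)
  rw [hw]
  exact Set.mul_mem_mul (conj_mem_inv_mul_Xset hk hc w) hd

end

theorem stmt_7_general {G : Type*} [Group G] (a b : G) (k n : ℕ) (hk : 1 ≤ k)
    (ha : (Xset a k).encard ≤ n) :
    (Xset (a * b) k).encard ≤ (n : ℕ∞) ^ 3 * (Xset b k).encard := by
  have hn : (1 : ℕ∞) ≤ n := by
    simpa using (Set.encard_le_encard (Set.singleton_subset_iff.2 (one_mem_Xset a hk))).trans ha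
  calc (Xset (a * b) k).encard
      ≤ ((Xset a k)⁻¹ * Xset a k * Xset b k).encard :=
        Set.encard_le_encard (Xset_mul_subset a b hk)
    _ ≤ (Xset a k).encard * (Xset a k).encard * (Xset b k).encard := by
      grw [Set.encard_mul_le, Set.encard_mul_le, Set.encard_inv]
    _ ≤ (n : ℕ∞) ^ 2 * (Xset b k).encard := by
      rw [sq]
      gcongr
    _ ≤ (n : ℕ∞) ^ 3 * (Xset b k).encard := by
      gcongr ?_ * _
      exact pow_le_pow_right₀ hn (by norm_num)

theorem stmt_7 {G : Type*} [Group G] (a b : G) (k n : ℕ) (hk : 1 ≤ k)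
    (ha : (Xset a k).encard ≤ n) (hb : (Xset b k).Finite) :
    (Xset (a * b) k).encard ≤ (n : ℕ∞) ^ 3 * (Xset b k).encard :=
  stmt_7_general a b k n hk ha
end
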